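/- arXiv:1010.3267 — 2 statements merged into one kernel-verified Lean document; each statement's English description precedes it below -/
import Mathlib

section
/- For the Mills ratio m(·; α) of the gamma distribution, the function x ↦ x² m′(x; α) is decreasing on (0,∞) if 1 ≤ α ≤ 2 and increasing on (0,∞) if 0 < α ≤ 1 or α ≥ 2; equivalently, x ↦ m(1/x; α) is concave on (0,∞) if 1 ≤ α ≤ 2 and convex on (0,∞) if 0 < α ≤ 1 or α ≥ 2. -/
/-- The Mills ratio of the gamma distribution with shape parameter `α`:
`m(x; α) = Γ(α, x)/(x^(α−1) e^(−x))`, where `Γ(α, x) = ∫ₓ^∞ t^(α−1) e^(−t) dt` is the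
upper incomplete gamma function. -/
noncomputable def gammaMills (α x : ℝ) : ℝ :=
  (∫ t in Set.Ioi x, t ^ (α - 1) * Real.exp (-t)) / (x ^ (α - 1) * Real.exp (-x))

/-!
Substituting `t = u + 1/y` gives `m(1/y; α) = ∫₀^∞ e^{-u} (1 + u y)^{α-1} du`, a positive average of
the functions `y ↦ (1 + u y)^{α-1}`, which are convex when `α - 1 ≤ 0` or `α - 1 ≥ 1` and concave
when `0 ≤ α - 1 ≤ 1`. Since `x² m'(x) = -(d/dy) m(1/y)` at `y = 1/x`, convexity (concavity) of
`y ↦ m(1/y)` makes `x ↦ x² m'(x)` increasing (decreasing).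
-/

open Set MeasureTheory Real

section

variable {E : Type*} [NormedAddCommGroup E]

theorem integrableOn_Ioi_comp_add_right_iff {f : ℝ → E} {x : ℝ} :
    IntegrableOn (fun u => f (u + x)) (Ioi 0) ↔ IntegrableOn f (Ioi x) := by
  have h := (measurePreserving_add_right volume x).integrableOn_comp_preimage
    (MeasurableEquiv.addRight x).measurableEmbedding (f := f) (s := Ioi x)
  rwa [preimage_add_const_Ioi, sub_self] at h

variable [NormedSpace ℝ E]

theorem integral_Ioi_comp_add_right (f : ℝ → E) (x : ℝ) :
    ∫ u in Ioi 0, f (u + x) = ∫ t in Ioi x, f t := by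
  have h := (measurePreserving_add_right volume x).setIntegral_preimage_emb
    (MeasurableEquiv.addRight x).measurableEmbedding f (Ioi x)
  rwa [preimage_add_const_Ioi, sub_self] at h

theorem hasDerivAt_integral_Ioi [CompleteSpace E] {f : ℝ → E} {a x : ℝ} (hax : a < x)
    (hf : IntegrableOn f (Ioi a)) (hcont : ContinuousAt f x) :
    HasDerivAt (fun y => ∫ t in Ioi y, f t) (-f x) x := by
  have hsplit : ∀ᶠ y in nhds x, ∫ t in Ioi y, f t = (∫ t in Ioi a, f t) - ∫ t in a..y, f t := by
    filter_upwards [Ioi_mem_nhds hax] with y hy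
    rw [← intervalIntegral.integral_Ioi_sub_Ioi hf hy.le, sub_sub_cancel]
  have hFTC : HasDerivAt (fun y => ∫ t in a..y, f t) (f x) x :=
    intervalIntegral.integral_hasDerivAt_right
      ((intervalIntegrable_iff_integrableOn_Ioc_of_le hax.le).2 (hf.mono_set Ioc_subset_Ioi_self))
      (AEStronglyMeasurable.stronglyMeasurableAtFilter_of_mem hf.aestronglyMeasurable
        (Ioi_mem_nhds hax)) hcont
  exact (hFTC.const_sub _).congr_of_eventuallyEq hsplit

end

theorem convexOn_integral {ι E : Type*} [MeasurableSpace ι] {μ : Measure ι} [AddCommGroup E]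
    [Module ℝ E] {s : Set E} {f : ι → E → ℝ} (hs : Convex ℝ s)
    (hf : ∀ᵐ u ∂μ, ConvexOn ℝ s (f u)) (hint : ∀ y ∈ s, Integrable (fun u => f u y) μ) :
    ConvexOn ℝ s fun y => ∫ u, f u y ∂μ := by
  refine ⟨hs, fun x hx y hy a b ha hb hab => ?_⟩
  simp only [smul_eq_mul]
  rw [← integral_const_mul, ← integral_const_mul, ← integral_add ((hint x hx).const_mul a)
    ((hint y hy).const_mul b)]
  refine integral_mono_ae (hint _ (hs hx hy ha hb hab)) (((hint x hx).const_mul a).add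
    ((hint y hy).const_mul b)) ?_
  filter_upwards [hf] with u hu using hu.2 hx hy ha hb hab

theorem concaveOn_integral {ι E : Type*} [MeasurableSpace ι] {μ : Measure ι} [AddCommGroup E]
    [Module ℝ E] {s : Set E} {f : ι → E → ℝ} (hs : Convex ℝ s)
    (hf : ∀ᵐ u ∂μ, ConcaveOn ℝ s (f u)) (hint : ∀ y ∈ s, Integrable (fun u => f u y) μ) :
    ConcaveOn ℝ s fun y => ∫ u, f u y ∂μ := by
  rw [← neg_convexOn_iff]
  simpa only [Pi.neg_def, integral_neg] using convexOn_integral (f := fun u y => -f u y) hs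
    (hf.mono fun u hu => hu.neg) fun y hy => (hint y hy).neg

theorem convexOn_rpow_Ioi_of_nonpos {p : ℝ} (hp : p ≤ 0) :
    ConvexOn ℝ (Ioi 0) fun x : ℝ => x ^ p := by
  refine ⟨convex_Ioi 0, fun x hx y hy a b ha hb hab => ?_⟩
  have hlog := strictConcaveOn_log_Ioi.concaveOn.2 hx hy ha hb hab
  simp only [smul_eq_mul] at hlog ⊢
  have hxy : 0 < a * x + b * y := convex_Ioi 0 hx hy ha hb hab
  calc (a * x + b * y) ^ p = exp (log (a * x + b * y) * p) := rpow_def_of_pos hxy p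
    _ ≤ exp ((a * log x + b * log y) * p) := exp_le_exp.2 (mul_le_mul_of_nonpos_right hlog hp)
    _ = exp (a * (log x * p) + b * (log y * p)) := by ring_nf
    _ ≤ a * exp (log x * p) + b * exp (log y * p) :=
        convexOn_exp.2 (mem_univ _) (mem_univ _) ha hb hab
    _ = a * x ^ p + b * y ^ p := by rw [rpow_def_of_pos hx, rpow_def_of_pos hy]

theorem convexOn_rpow_Ioi {p : ℝ} (hp : p ≤ 0 ∨ 1 ≤ p) : ConvexOn ℝ (Ioi 0) fun x : ℝ => x ^ p :=
  hp.elim convexOn_rpow_Ioi_of_nonpos fun hp =>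
    (convexOn_rpow hp).subset Ioi_subset_Ici_self (convex_Ioi 0)

theorem lineMap_one_one_add (u y : ℝ) : AffineMap.lineMap (1 : ℝ) (1 + u) y = 1 + u * y := by
  rw [AffineMap.lineMap_apply_ring]; ring

theorem convexOn_one_add_mul_rpow {p u : ℝ} (hp : p ≤ 0 ∨ 1 ≤ p) (hu : 0 ≤ u) :
    ConvexOn ℝ (Ioi 0) fun y : ℝ => (1 + u * y) ^ p := by
  have h := (convexOn_rpow_Ioi hp).comp_affineMap (AffineMap.lineMap (1 : ℝ) (1 + u))
  refine (h.subset (fun y hy => ?_) (convex_Ioi 0)).congr fun y _ => ?_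
  · simp only [mem_preimage, lineMap_one_one_add, mem_Ioi] at hy ⊢
    positivity
  · simp only [Function.comp_apply, lineMap_one_one_add]

theorem concaveOn_one_add_mul_rpow {p u : ℝ} (hp₀ : 0 ≤ p) (hp₁ : p ≤ 1) (hu : 0 ≤ u) :
    ConcaveOn ℝ (Ioi 0) fun y : ℝ => (1 + u * y) ^ p := by
  have h := (Real.concaveOn_rpow hp₀ hp₁).comp_affineMap (AffineMap.lineMap (1 : ℝ) (1 + u))
  refine (h.subset (fun y hy => ?_) (convex_Ioi 0)).congr fun y _ => ?_
  · simp only [mem_preimage, lineMap_one_one_add, mem_Ici, mem_Ioi] at hy ⊢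
    positivity
  · simp only [Function.comp_apply, lineMap_one_one_add]

theorem integrableOn_rpow_mul_exp_neg_Ioi {α x : ℝ} (hα : 0 < α) (hx : 0 ≤ x) :
    IntegrableOn (fun t => t ^ (α - 1) * exp (-t)) (Ioi x) :=
  ((GammaIntegral_convergent hα).congr_fun (fun _ _ => mul_comm _ _) measurableSet_Ioi).mono_set
    (Ioi_subset_Ioi hx)

theorem add_one_div_rpow_mul_exp_neg {p u y : ℝ} (hu : 0 ≤ u) (hy : 0 < y) :
    (u + 1 / y) ^ p * exp (-(u + 1 / y))
      = (1 / y) ^ p * exp (-(1 / y)) * (exp (-u) * (1 + u * y) ^ p) := by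
  have hsplit : u + 1 / y = 1 / y * (1 + u * y) := by field_simp; ring
  rw [hsplit, mul_rpow (by positivity) (by positivity), ← hsplit, neg_add, exp_add]
  ring

theorem gammaMills_one_div_eq_integral (α : ℝ) {y : ℝ} (hy : 0 < y) :
    gammaMills α (1 / y) = ∫ u in Ioi 0, exp (-u) * (1 + u * y) ^ (α - 1) := by
  rw [gammaMills, ← integral_Ioi_comp_add_right,
    setIntegral_congr_fun measurableSet_Ioi fun u hu => add_one_div_rpow_mul_exp_neg hu.le hy,
    integral_const_mul, mul_div_cancel_left₀ _ (by positivity)]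

theorem integrableOn_exp_neg_mul_one_add_mul_rpow {α y : ℝ} (hα : 0 < α) (hy : 0 < y) :
    IntegrableOn (fun u => exp (-u) * (1 + u * y) ^ (α - 1)) (Ioi 0) := by
  have h := integrableOn_Ioi_comp_add_right_iff.2
    (integrableOn_rpow_mul_exp_neg_Ioi hα (one_div_pos.2 hy).le)
  refine IntegrableOn.congr_fun (h.const_mul ((1 / y) ^ (α - 1) * exp (-(1 / y)))⁻¹)
    (fun u hu => ?_) measurableSet_Ioi
  rw [add_one_div_rpow_mul_exp_neg (mem_Ioi.1 hu).le hy, inv_mul_cancel_left₀ (by positivity)]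

theorem convexOn_gammaMills_one_div {α : ℝ} (hα : 0 < α) (h : α ≤ 1 ∨ 2 ≤ α) :
    ConvexOn ℝ (Ioi 0) fun y => gammaMills α (1 / y) := by
  have hp : α - 1 ≤ 0 ∨ 1 ≤ α - 1 := h.imp (fun h => by linarith) fun h => by linarith
  refine (convexOn_integral (convex_Ioi 0) (ae_restrict_of_forall_mem measurableSet_Ioi
    fun u hu => (convexOn_one_add_mul_rpow hp (mem_Ioi.1 hu).le).smul (exp_pos (-u)).le)
    fun y hy => integrableOn_exp_neg_mul_one_add_mul_rpow hα hy).congr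
    fun y hy => (gammaMills_one_div_eq_integral α hy).symm

theorem concaveOn_gammaMills_one_div {α : ℝ} (h₁ : 1 ≤ α) (h₂ : α ≤ 2) :
    ConcaveOn ℝ (Ioi 0) fun y => gammaMills α (1 / y) := by
  refine (concaveOn_integral (convex_Ioi 0) (ae_restrict_of_forall_mem measurableSet_Ioi
    fun u hu => (concaveOn_one_add_mul_rpow (by linarith) (by linarith) (mem_Ioi.1 hu).le).smul
      (exp_pos (-u)).le)
    fun y hy => integrableOn_exp_neg_mul_one_add_mul_rpow (by linarith) hy).congr
    fun y hy => (gammaMills_one_div_eq_integral α hy).symm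

theorem differentiableAt_gammaMills {α x : ℝ} (hα : 0 < α) (hx : 0 < x) :
    DifferentiableAt ℝ (gammaMills α) x := by
  have hden : DifferentiableAt ℝ (fun x : ℝ => x ^ (α - 1) * exp (-x)) x := by
    fun_prop (disch := positivity)
  have hnum : HasDerivAt (fun x => ∫ t in Ioi x, t ^ (α - 1) * exp (-t))
      (-(x ^ (α - 1) * exp (-x))) x :=
    hasDerivAt_integral_Ioi (half_lt_self hx)
      (integrableOn_rpow_mul_exp_neg_Ioi hα (half_pos hx).le) hden.continuousAt
  exact hnum.differentiableAt.div hden (by positivity)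

theorem sq_mul_deriv_eq_neg_deriv_comp_one_div {f : ℝ → ℝ} {x : ℝ} (hx : x ≠ 0)
    (hf : DifferentiableAt ℝ f x) :
    x ^ 2 * deriv f x = -deriv (fun y => f (1 / y)) (1 / x) := by
  have hinv : HasDerivAt (fun y : ℝ => 1 / y) (-x ^ 2) (1 / x) := by
    simpa [one_div] using hasDerivAt_inv (inv_ne_zero hx)
  rw [← one_div_one_div x] at hf
  have hcomp : HasDerivAt (fun y => f (1 / y)) (deriv f (1 / (1 / x)) * -x ^ 2) (1 / x) :=
    hf.hasDerivAt.comp (1 / x) hinv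
  rw [hcomp.deriv, one_div_one_div]
  ring

theorem monotoneOn_sq_mul_deriv_of_convexOn {f : ℝ → ℝ}
    (hf : ∀ x ∈ Ioi (0 : ℝ), DifferentiableAt ℝ f x)
    (hconv : ConvexOn ℝ (Ioi 0) fun y => f (1 / y)) :
    MonotoneOn (fun x => x ^ 2 * deriv f x) (Ioi 0) := by
  have hg : ∀ y ∈ Ioi (0 : ℝ), DifferentiableAt ℝ (fun y => f (1 / y)) y := fun y hy =>
    (hf _ (mem_Ioi.2 (one_div_pos.2 hy))).comp y
      ((differentiableAt_const 1).div differentiableAt_id hy.ne')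
  intro x hx x' hx' hxx'
  have hderiv := hconv.monotoneOn_deriv hg (mem_Ioi.2 (one_div_pos.2 hx'))
    (mem_Ioi.2 (one_div_pos.2 hx)) (one_div_le_one_div_of_le hx hxx')
  simp only
  rw [sq_mul_deriv_eq_neg_deriv_comp_one_div hx.ne' (hf x hx),
    sq_mul_deriv_eq_neg_deriv_comp_one_div hx'.ne' (hf x' hx')]
  exact neg_le_neg hderiv

theorem antitoneOn_sq_mul_deriv_of_concaveOn {f : ℝ → ℝ}
    (hf : ∀ x ∈ Ioi (0 : ℝ), DifferentiableAt ℝ f x)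
    (hconc : ConcaveOn ℝ (Ioi 0) fun y => f (1 / y)) :
    AntitoneOn (fun x => x ^ 2 * deriv f x) (Ioi 0) := by
  have h := monotoneOn_sq_mul_deriv_of_convexOn (f := -f) (fun x hx => (hf x hx).neg) hconc.neg
  intro x hx x' hx' hxx'
  have hneg := h hx hx' hxx'
  simp only [deriv.neg', mul_neg] at hneg ⊢
  linarith

/-- For the Mills ratio `m(·; α)` of the gamma distribution, the function
`x ↦ x² m′(x; α)` is decreasing on `(0,∞)` if `1 ≤ α ≤ 2` and increasing on `(0,∞)` if
`0 < α ≤ 1` or `α ≥ 2`; equivalently, `x ↦ m(1/x; α)` is concave on `(0,∞)` if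
`1 ≤ α ≤ 2` and convex on `(0,∞)` if `0 < α ≤ 1` or `α ≥ 2`. -/
theorem gammaMills_sq_mul_deriv_monotonicity (α : ℝ) :
    (1 ≤ α → α ≤ 2 →
      AntitoneOn (fun x : ℝ => x ^ 2 * deriv (gammaMills α) x) (Set.Ioi 0) ∧
        ConcaveOn ℝ (Set.Ioi 0) (fun x : ℝ => gammaMills α (1 / x))) ∧
    (0 < α → (α ≤ 1 ∨ 2 ≤ α) →
      MonotoneOn (fun x : ℝ => x ^ 2 * deriv (gammaMills α) x) (Set.Ioi 0) ∧
        ConvexOn ℝ (Set.Ioi 0) (fun x : ℝ => gammaMills α (1 / x))) := by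
  refine ⟨fun h₁ h₂ => ?_, fun hα h => ?_⟩
  · have hconc := concaveOn_gammaMills_one_div h₁ h₂
    exact ⟨antitoneOn_sq_mul_deriv_of_concaveOn
      (fun x hx => differentiableAt_gammaMills (by linarith) hx) hconc, hconc⟩
  · have hconv := convexOn_gammaMills_one_div hα h
    exact ⟨monotoneOn_sq_mul_deriv_of_convexOn
      (fun x hx => differentiableAt_gammaMills hα hx) hconv, hconv⟩
end

section
/- For α > 2, both x ↦ m(x; α) and x ↦ m(1/x; α) are convex on (0,∞), where m(·; α) is the Mills ratio of the gamma distribution; consequently, for α > 2 the Mills ratio of the gamma distribution is neither reciprocally convex nor reciprocally concave on (0,∞). -/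
open MeasureTheory Set Real

section ParametricIntegral

variable {ι : Type*} [MeasurableSpace ι] {μ : Measure ι} [NeZero μ]

theorem integral_lt_integral_of_ae_lt {f g : ι → ℝ} (hf : Integrable f μ) (hg : Integrable g μ)
    (hlt : ∀ᵐ i ∂μ, f i < g i) : ∫ i, f i ∂μ < ∫ i, g i ∂μ := by
  rw [← sub_pos, ← integral_sub hg hf]
  refine (integral_pos_iff_support_of_nonneg_ae (hlt.mono fun i hi => sub_nonneg.2 hi.le)
    (hg.sub hf)).2 (pos_iff_ne_zero.2 fun hzero => NeZero.ne μ ?_)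
  have hvanish : ∀ᵐ i ∂μ, g i - f i = 0 := by
    simpa only [Function.mem_support, not_not] using measure_eq_zero_iff_ae_notMem.1 hzero
  exact ae_eq_bot.1 (Filter.eventually_false_iff_eq_bot.1 <|
    (hlt.and hvanish).mono fun i hi => (sub_ne_zero.2 hi.1.ne') hi.2)

theorem strictConvexOn_integral {E : Type*} [AddCommGroup E] [Module ℝ E] {s : Set E}
    {g : ι → E → ℝ} (hs : Convex ℝ s) (hint : ∀ x ∈ s, Integrable (g · x) μ)
    (hg : ∀ᵐ i ∂μ, StrictConvexOn ℝ s (g i)) : StrictConvexOn ℝ s fun x => ∫ i, g i x ∂μ := by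
  refine ⟨hs, fun x hx y hy hxy a b ha hb hab => ?_⟩
  have hcomb : Integrable (fun i => a * g i x + b * g i y) μ :=
    ((hint x hx).const_mul a).add ((hint y hy).const_mul b)
  calc ∫ i, g i (a • x + b • y) ∂μ < ∫ i, a * g i x + b * g i y ∂μ :=
        integral_lt_integral_of_ae_lt (hint _ (hs hx hy ha.le hb.le hab)) hcomb
          (hg.mono fun i hi => hi.2 hx hy hxy ha hb hab)
    _ = a • ∫ i, g i x ∂μ + b • ∫ i, g i y ∂μ := by
        rw [integral_add ((hint x hx).const_mul a) ((hint y hy).const_mul b), integral_const_mul,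
          integral_const_mul, smul_eq_mul, smul_eq_mul]

theorem strictMonoOn_integral {β : Type*} [Preorder β] {s : Set β} {g : ι → β → ℝ}
    (hint : ∀ x ∈ s, Integrable (g · x) μ) (hg : ∀ᵐ i ∂μ, StrictMonoOn (g i) s) :
    StrictMonoOn (fun x => ∫ i, g i x ∂μ) s := fun x hx y hy hxy =>
  integral_lt_integral_of_ae_lt (hint x hx) (hint y hy) (hg.mono fun _ hi => hi hx hy hxy)

end ParametricIntegral

theorem StrictConvexOn.not_concaveOn {E : Type*} [AddCommGroup E] [Module ℝ E] {s : Set E}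
    {f : E → ℝ} (hf : StrictConvexOn ℝ s f) {x y : E} (hx : x ∈ s) (hy : y ∈ s) (hxy : x ≠ y) :
    ¬ConcaveOn ℝ s f := fun hconc =>
  (hf.2 hx hy hxy one_half_pos one_half_pos (add_halves 1)).not_ge
    (hconc.2 hx hy one_half_pos.le one_half_pos.le (add_halves 1))

theorem strictConvexOn_inv_Ioi : StrictConvexOn ℝ (Ioi 0) fun x : ℝ => x⁻¹ := by
  simpa only [zpow_neg_one] using strictConvexOn_zpow (m := -1) (by decide) (by decide)

theorem image_inv_Ioi_zero : (fun x : ℝ => x⁻¹) '' Ioi 0 = Ioi 0 := by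
  rw [image_inv_eq_inv]
  ext x
  simp

instance : NeZero (volume.restrict (Ioi (0 : ℝ))) :=
  ⟨by simp [Measure.restrict_eq_zero]⟩

noncomputable def gammaMillsRecip (α c : ℝ) : ℝ :=
  ∫ u in Ioi 0, (1 + u * c) ^ (α - 1) * exp (-u)

theorem setIntegral_Ioi_eq_setIntegral_Ioi_zero_comp_add (f : ℝ → ℝ) (x : ℝ) :
    ∫ t in Ioi x, f t = ∫ u in Ioi 0, f (u + x) := by
  have h := (measurePreserving_add_right volume x).setIntegral_preimage_emb
    (measurableEmbedding_addRight x) f (Ioi x)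
  rwa [preimage_add_const_Ioi, sub_self, eq_comm] at h

theorem integrableOn_Ioi_zero_comp_add_iff (f : ℝ → ℝ) (x : ℝ) :
    IntegrableOn (fun u => f (u + x)) (Ioi 0) ↔ IntegrableOn f (Ioi x) := by
  have h := (measurePreserving_add_right volume x).integrableOn_comp_preimage
    (measurableEmbedding_addRight x) (f := f) (s := Ioi x)
  rwa [preimage_add_const_Ioi, sub_self] at h

theorem add_rpow_mul_exp_neg_add_eq {α x u : ℝ} (hx : 0 < x) (hu : 0 ≤ u) :
    (u + x) ^ (α - 1) * exp (-(u + x)) =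
      x ^ (α - 1) * exp (-x) * ((1 + u * x⁻¹) ^ (α - 1) * exp (-u)) := by
  have hsplit : u + x = x * (1 + u * x⁻¹) := by field_simp; ring
  rw [hsplit, mul_rpow hx.le (by positivity), ← hsplit, neg_add, exp_add]
  ring

theorem gammaMills_eq_gammaMillsRecip_inv (α : ℝ) {x : ℝ} (hx : 0 < x) :
    gammaMills α x = gammaMillsRecip α x⁻¹ := by
  rw [gammaMills, gammaMillsRecip, div_eq_iff (by positivity),
    setIntegral_Ioi_eq_setIntegral_Ioi_zero_comp_add, mul_comm, ← integral_const_mul]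
  exact setIntegral_congr_fun measurableSet_Ioi fun u hu =>
    add_rpow_mul_exp_neg_add_eq hx (le_of_lt hu)

theorem gammaMills_one_div_eq_gammaMillsRecip (α : ℝ) {c : ℝ} (hc : 0 < c) :
    gammaMills α (1 / c) = gammaMillsRecip α c := by
  rw [gammaMills_eq_gammaMillsRecip_inv α (one_div_pos.2 hc), one_div, inv_inv]

theorem integrableOn_gammaMillsRecip_integrand {α c : ℝ} (hα : 0 < α) (hc : 0 < c) :
    IntegrableOn (fun u => (1 + u * c) ^ (α - 1) * exp (-u)) (Ioi 0) := by
  have hx : 0 < c⁻¹ := inv_pos.2 hc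
  have hgamma : IntegrableOn (fun t => t ^ (α - 1) * exp (-t)) (Ioi c⁻¹) :=
    ((GammaIntegral_convergent hα).mono_set (Ioi_subset_Ioi hx.le)).congr_fun
      (fun t _ => mul_comm _ _) measurableSet_Ioi
  have hshift := ((integrableOn_Ioi_zero_comp_add_iff _ c⁻¹).2 hgamma).const_mul
    (c⁻¹ ^ (α - 1) * exp (-c⁻¹))⁻¹
  refine IntegrableOn.congr_fun hshift (fun u hu => ?_) measurableSet_Ioi
  rw [add_rpow_mul_exp_neg_add_eq hx (le_of_lt hu), inv_inv, inv_mul_cancel_left₀ (by positivity)]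

theorem strictConvexOn_gammaMillsRecip_integrand {α u : ℝ} (hα : 2 < α) (hu : 0 < u) :
    StrictConvexOn ℝ (Ioi 0) fun c => (1 + u * c) ^ (α - 1) * exp (-u) := by
  refine ⟨convex_Ioi 0, fun x hx y hy hxy a b ha hb hab => ?_⟩
  rw [mem_Ioi] at hx hy
  have hne : 1 + u * x ≠ 1 + u * y := by simpa [hu.ne'] using hxy
  have hrpow := (strictConvexOn_rpow (by linarith : 1 < α - 1)).2
    (mem_Ici.2 (by positivity : 0 ≤ 1 + u * x)) (mem_Ici.2 (by positivity : 0 ≤ 1 + u * y))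
    hne ha hb hab
  have haffine : a • (1 + u * x) + b • (1 + u * y) = 1 + u * (a • x + b • y) := by
    simp only [smul_eq_mul]; linear_combination hab
  rw [haffine] at hrpow
  simpa only [smul_eq_mul, add_mul, mul_assoc] using
    mul_lt_mul_of_pos_right hrpow (exp_pos (-u))

theorem strictMonoOn_gammaMillsRecip_integrand {α u : ℝ} (hα : 1 < α) (hu : 0 < u) :
    StrictMonoOn (fun c => (1 + u * c) ^ (α - 1) * exp (-u)) (Ioi 0) := by
  intro x hx y _ hxy
  rw [mem_Ioi] at hx
  have hbase : 1 + u * x < 1 + u * y := by gcongr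
  exact mul_lt_mul_of_pos_right (rpow_lt_rpow (by positivity) hbase (by linarith)) (exp_pos (-u))

theorem strictConvexOn_gammaMillsRecip {α : ℝ} (hα : 2 < α) :
    StrictConvexOn ℝ (Ioi 0) (gammaMillsRecip α) :=
  strictConvexOn_integral (convex_Ioi 0)
    (fun _ hc => integrableOn_gammaMillsRecip_integrand (by linarith) hc)
    ((ae_restrict_mem measurableSet_Ioi).mono fun _ hu =>
      strictConvexOn_gammaMillsRecip_integrand hα hu)

theorem strictMonoOn_gammaMillsRecip {α : ℝ} (hα : 1 < α) :
    StrictMonoOn (gammaMillsRecip α) (Ioi 0) :=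
  strictMonoOn_integral
    (fun _ hc => integrableOn_gammaMillsRecip_integrand (by linarith) hc)
    ((ae_restrict_mem measurableSet_Ioi).mono fun _ hu =>
      strictMonoOn_gammaMillsRecip_integrand hα hu)

theorem strictConvexOn_gammaMills {α : ℝ} (hα : 2 < α) :
    StrictConvexOn ℝ (Ioi 0) (gammaMills α) := by
  have hcomp : StrictConvexOn ℝ (Ioi 0) (gammaMillsRecip α ∘ fun x => x⁻¹) := by
    refine ConvexOn.comp_strictConvexOn ?_ strictConvexOn_inv_Ioi ?_ <;> rw [image_inv_Ioi_zero]
    exacts [(strictConvexOn_gammaMillsRecip hα).convexOn,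
      strictMonoOn_gammaMillsRecip (by linarith)]
  exact hcomp.congr fun x hx => (gammaMills_eq_gammaMillsRecip_inv α hx).symm

theorem strictConvexOn_gammaMills_one_div {α : ℝ} (hα : 2 < α) :
    StrictConvexOn ℝ (Ioi 0) fun x => gammaMills α (1 / x) :=
  (strictConvexOn_gammaMillsRecip hα).congr fun _ hc =>
    (gammaMills_one_div_eq_gammaMillsRecip α hc).symm

/-- For `α > 2`, both `x ↦ m(x; α)` and `x ↦ m(1/x; α)` are convex on `(0,∞)`;
consequently, for `α > 2` the Mills ratio of the gamma distribution is neither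
reciprocally convex (concave on `(0,∞)` with `m(1/·)` convex) nor reciprocally concave
(convex on `(0,∞)` with `m(1/·)` concave) on `(0,∞)`. -/
theorem gammaMills_neither_reciprocally_convex_nor_concave (α : ℝ) (hα : 2 < α) :
    ConvexOn ℝ (Set.Ioi 0) (gammaMills α) ∧
      ConvexOn ℝ (Set.Ioi 0) (fun x : ℝ => gammaMills α (1 / x)) ∧
      ¬(ConcaveOn ℝ (Set.Ioi 0) (gammaMills α) ∧
          ConvexOn ℝ (Set.Ioi 0) (fun x : ℝ => gammaMills α (1 / x))) ∧
      ¬(ConvexOn ℝ (Set.Ioi 0) (gammaMills α) ∧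
          ConcaveOn ℝ (Set.Ioi 0) (fun x : ℝ => gammaMills α (1 / x))) := by
  have hm := strictConvexOn_gammaMills hα
  have hm_one_div := strictConvexOn_gammaMills_one_div hα
  have h1 : (1 : ℝ) ∈ Ioi 0 := mem_Ioi.2 one_pos
  have h2 : (2 : ℝ) ∈ Ioi 0 := mem_Ioi.2 two_pos
  exact ⟨hm.convexOn, hm_one_div.convexOn,
    fun h => hm.not_concaveOn h1 h2 (by norm_num) h.1,
    fun h => hm_one_div.not_concaveOn h1 h2 (by norm_num) h.2⟩
end
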